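/- arXiv:2008.09511 — 9 statements merged into one kernel-verified Lean document; each statement's English description precedes it below -/
import Mathlib

section
/- Let (Ω, P) be a probability space and (X_i)_{i∈ℕ} a mutually independent family of random variables each taking values in {0,1}. Let X = Σ_{i=0}^∞ X_i (pointwise sum, taken in [0,∞]) and assume E[X] < ∞. Then for every integer k ≥ 2 it holds that E[X^k] ≤ E[X^{k-1}] · (k − 1 + E[X]). -/
open MeasureTheory ProbabilityTheory ENNReal Finset

/-!
For a finite partial sum `Y = ∑ i ∈ s, X i` write `Y ^ (m + 2) = ∑ i, X i * Y ^ (m + 1)`.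
Since `X i ∈ {0, 1}`, on the event `X i = 1` we have `Y = 1 + S i` with `S i = ∑ j ≠ i, X j`,
which is independent of `X i`; hence `E[X i * Y ^ p] = E[X i] * E[(1 + S i) ^ p]`. The bound
`(1 + t) ^ (m + 1) ≤ t ^ (m + 1) + (m + 1) (1 + t) ^ m`, together with `S i ≤ Y` and the same
factorisation read backwards at exponent `m`, gives
`E[X i * Y ^ (m + 1)] ≤ E[X i] E[Y ^ (m + 1)] + (m + 1) E[X i * Y ^ m]`, and summing over `i`
yields the inequality for `Y`. Monotone convergence passes it to the infinite sum.
-/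

theorem one_add_pow_succ_le {R : Type*} [CommSemiring R] [PartialOrder R] [IsOrderedRing R]
    [CanonicallyOrderedAdd R] (t : R) (m : ℕ) :
    (1 + t) ^ (m + 1) ≤ t ^ (m + 1) + (m + 1) * (1 + t) ^ m := by
  induction m with
  | zero => simp [add_comm]
  | succ m ih =>
    calc (1 + t) ^ (m + 1 + 1) = (1 + t) * (1 + t) ^ (m + 1) := pow_succ' _ _
      _ ≤ (1 + t) * (t ^ (m + 1) + (m + 1) * (1 + t) ^ m) := by gcongr
      _ = t ^ (m + 2) + (t ^ (m + 1) + (m + 1) * (1 + t) ^ (m + 1)) := by ring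
      _ ≤ t ^ (m + 2) + ((1 + t) ^ (m + 1) + (m + 1) * (1 + t) ^ (m + 1)) := by
        gcongr
        exact le_add_self
      _ = t ^ (m + 1 + 1) + ((m + 1 : ℕ) + 1) * (1 + t) ^ (m + 1) := by push_cast; ring

theorem mul_sum_pow_eq_mul_one_add_sum_erase_pow {ι R : Type*} [DecidableEq ι] [CommSemiring R]
    {a : ι → R} {s : Finset ι} {i : ι} (hi : i ∈ s) (ha : a i = 0 ∨ a i = 1) (p : ℕ) :
    a i * (∑ j ∈ s, a j) ^ p = a i * (1 + ∑ j ∈ s.erase i, a j) ^ p := by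
  rcases ha with h | h
  · simp [h]
  · rw [← add_sum_erase s a hi, h]

section FiniteSum

variable {Ω ι : Type*} [MeasurableSpace Ω] {P : Measure Ω} {X : ι → Ω → ℝ≥0∞}

theorem lintegral_sum_pow_succ (hmeas : ∀ i, Measurable (X i)) (s : Finset ι) (p : ℕ) :
    ∫⁻ ω, (∑ i ∈ s, X i ω) ^ (p + 1) ∂P =
      ∑ i ∈ s, ∫⁻ ω, X i ω * (∑ j ∈ s, X j ω) ^ p ∂P := by
  rw [← lintegral_finsetSum (f := fun i ω => X i ω * (∑ j ∈ s, X j ω) ^ p) s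
    fun i _ => by fun_prop]
  simp_rw [pow_succ', sum_mul]

theorem lintegral_mul_sum_pow_eq [DecidableEq ι] (hmeas : ∀ i, Measurable (X i))
    (hindep : iIndepFun X P) {s : Finset ι} {i : ι} (hi : i ∈ s)
    (h01 : ∀ ω, X i ω = 0 ∨ X i ω = 1) (p : ℕ) :
    ∫⁻ ω, X i ω * (∑ j ∈ s, X j ω) ^ p ∂P =
      (∫⁻ ω, X i ω ∂P) * ∫⁻ ω, (1 + ∑ j ∈ s.erase i, X j ω) ^ p ∂P := by
  have h_indep : IndepFun (X i) (fun ω => (1 + ∑ j ∈ s.erase i, X j ω) ^ p) P := by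
    have := (hindep.indepFun_finsetSum_of_notMem hmeas (s.notMem_erase i)).symm.comp
      (ψ := fun t => (1 + t) ^ p) measurable_id (by fun_prop)
    simpa [Function.comp_def, Finset.sum_apply] using this
  rw [lintegral_congr fun ω =>
    mul_sum_pow_eq_mul_one_add_sum_erase_pow (a := (X · ω)) hi (h01 ω) p]
  exact lintegral_mul_eq_lintegral_mul_lintegral_of_indepFun'' (hmeas i).aemeasurable
    (by fun_prop) h_indep

theorem lintegral_mul_sum_pow_succ_le [DecidableEq ι] (hmeas : ∀ i, Measurable (X i))
    (hindep : iIndepFun X P) {s : Finset ι} {i : ι} (hi : i ∈ s)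
    (h01 : ∀ ω, X i ω = 0 ∨ X i ω = 1) (m : ℕ) :
    ∫⁻ ω, X i ω * (∑ j ∈ s, X j ω) ^ (m + 1) ∂P ≤
      (∫⁻ ω, X i ω ∂P) * ∫⁻ ω, (∑ j ∈ s, X j ω) ^ (m + 1) ∂P +
        (m + 1) * ∫⁻ ω, X i ω * (∑ j ∈ s, X j ω) ^ m ∂P := by
  set S : Ω → ℝ≥0∞ := fun ω => ∑ j ∈ s.erase i, X j ω
  have h_binom : ∫⁻ ω, (1 + S ω) ^ (m + 1) ∂P ≤
      ∫⁻ ω, S ω ^ (m + 1) ∂P + (m + 1) * ∫⁻ ω, (1 + S ω) ^ m ∂P := by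
    calc ∫⁻ ω, (1 + S ω) ^ (m + 1) ∂P
        ≤ ∫⁻ ω, S ω ^ (m + 1) + (m + 1) * (1 + S ω) ^ m ∂P :=
          lintegral_mono fun ω => one_add_pow_succ_le _ _
      _ = _ := by
        rw [lintegral_add_left (by fun_prop), lintegral_const_mul _ (by fun_prop)]
  have h_erase : ∫⁻ ω, S ω ^ (m + 1) ∂P ≤ ∫⁻ ω, (∑ j ∈ s, X j ω) ^ (m + 1) ∂P :=
    lintegral_mono fun ω => by gcongr; exact sum_le_sum_of_subset (erase_subset i s)
  rw [lintegral_mul_sum_pow_eq hmeas hindep hi h01,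
    lintegral_mul_sum_pow_eq hmeas hindep hi h01]
  calc (∫⁻ ω, X i ω ∂P) * ∫⁻ ω, (1 + S ω) ^ (m + 1) ∂P
      ≤ (∫⁻ ω, X i ω ∂P) * (∫⁻ ω, (∑ j ∈ s, X j ω) ^ (m + 1) ∂P +
          (m + 1) * ∫⁻ ω, (1 + S ω) ^ m ∂P) := by
        gcongr
        exact h_binom.trans (by gcongr)
    _ = _ := by ring

theorem lintegral_sum_pow_add_two_le (hmeas : ∀ i, Measurable (X i))
    (h01 : ∀ i ω, X i ω = 0 ∨ X i ω = 1) (hindep : iIndepFun X P) (s : Finset ι) (m : ℕ) :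
    ∫⁻ ω, (∑ i ∈ s, X i ω) ^ (m + 2) ∂P ≤
      (∫⁻ ω, (∑ i ∈ s, X i ω) ^ (m + 1) ∂P) *
        ((m + 1) + ∫⁻ ω, ∑ i ∈ s, X i ω ∂P) := by
  classical
  calc ∫⁻ ω, (∑ i ∈ s, X i ω) ^ (m + 2) ∂P
      = ∑ i ∈ s, ∫⁻ ω, X i ω * (∑ j ∈ s, X j ω) ^ (m + 1) ∂P :=
        lintegral_sum_pow_succ hmeas s _
    _ ≤ ∑ i ∈ s, ((∫⁻ ω, X i ω ∂P) * ∫⁻ ω, (∑ j ∈ s, X j ω) ^ (m + 1) ∂P +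
          (m + 1) * ∫⁻ ω, X i ω * (∑ j ∈ s, X j ω) ^ m ∂P) :=
        sum_le_sum fun i hi => lintegral_mul_sum_pow_succ_le hmeas hindep hi (h01 i) m
    _ = (∑ i ∈ s, ∫⁻ ω, X i ω ∂P) * ∫⁻ ω, (∑ j ∈ s, X j ω) ^ (m + 1) ∂P +
          (m + 1) * ∫⁻ ω, (∑ j ∈ s, X j ω) ^ (m + 1) ∂P := by
        rw [sum_add_distrib, ← sum_mul, ← mul_sum, lintegral_sum_pow_succ hmeas]
    _ = _ := by rw [lintegral_finsetSum s fun i _ => hmeas i]; ring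

end FiniteSum

theorem lintegral_tsum_pow_eq_iSup {Ω : Type*} [MeasurableSpace Ω] {P : Measure Ω}
    {X : ℕ → Ω → ℝ≥0∞} (hmeas : ∀ i, Measurable (X i)) (p : ℕ) :
    ∫⁻ ω, (∑' i, X i ω) ^ p ∂P = ⨆ n, ∫⁻ ω, (∑ i ∈ range n, X i ω) ^ p ∂P := by
  simp_rw [ENNReal.tsum_eq_iSup_nat, ENNReal.iSup_pow]
  exact lintegral_iSup (fun n => by fun_prop) fun a b hab ω => by gcongr

theorem moments_inequality_general
    {Ω : Type*} [MeasurableSpace Ω] (P : Measure Ω)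
    (X : ℕ → Ω → ℝ≥0∞) (hmeas : ∀ i, Measurable (X i))
    (h01 : ∀ i ω, X i ω = 0 ∨ X i ω = 1)
    (hindep : iIndepFun X P)
    (k : ℕ) (hk : 2 ≤ k) :
    ∫⁻ ω, (∑' i, X i ω) ^ k ∂P ≤
      (∫⁻ ω, (∑' i, X i ω) ^ (k - 1) ∂P) *
        (((k : ℝ≥0∞) - 1) + ∫⁻ ω, (∑' i, X i ω) ∂P) := by
  obtain ⟨m, rfl⟩ : ∃ m, k = m + 2 := ⟨k - 2, by omega⟩
  have h_coeff : ((m + 2 : ℕ) : ℝ≥0∞) - 1 = m + 1 := by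
    rw [Nat.cast_add, Nat.cast_two, ← one_add_one_eq_two, ← add_assoc,
      ENNReal.add_sub_cancel_right one_ne_top]
  rw [h_coeff, show m + 2 - 1 = m + 1 by omega, lintegral_tsum_pow_eq_iSup hmeas]
  have h_partial : ∀ n ω, ∑ i ∈ range n, X i ω ≤ ∑' i, X i ω :=
    fun n ω => ENNReal.sum_le_tsum _
  refine iSup_le fun n => (lintegral_sum_pow_add_two_le hmeas h01 hindep _ m).trans ?_
  gcongr with ω ω <;> exact h_partial n ω

/-- Let `(Ω, P)` be a probability space and `(X i)_{i ∈ ℕ}` a mutually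
independent family of random variables each taking values in `{0,1}`. Let
`X = ∑' i, X i` (pointwise, in `[0,∞]`) and assume `E[X] < ∞`. Then for every `k ≥ 2`,
`E[X^k] ≤ E[X^{k-1}] · (k - 1 + E[X])`. -/
theorem moments_inequality
    {Ω : Type*} [MeasurableSpace Ω] (P : Measure Ω) [IsProbabilityMeasure P]
    (X : ℕ → Ω → ℝ≥0∞) (hmeas : ∀ i, Measurable (X i))
    (h01 : ∀ i ω, X i ω = 0 ∨ X i ω = 1)
    (hindep : iIndepFun X P)
    (hE : ∫⁻ ω, (∑' i, X i ω) ∂P < ⊤)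
    (k : ℕ) (hk : 2 ≤ k) :
    ∫⁻ ω, (∑' i, X i ω) ^ k ∂P ≤
      (∫⁻ ω, (∑' i, X i ω) ^ (k - 1) ∂P) *
        (((k : ℝ≥0∞) - 1) + ∫⁻ ω, (∑' i, X i ω) ∂P) :=
  moments_inequality_general P X hmeas h01 hindep k hk
end

section
/- Let (Ω, P) be a probability space, F a countable set, and (E_f)_{f∈F} a mutually independent family of events with P(E_f) = p_f. Let A be a finite set and s : F → Finset A. For ω ∈ Ω write I(ω) = {f ∈ F : ω ∈ E_f}. Then P({ω : I(ω) is a fact cover of A}) ≤ Σ_{F'} ∏_{f∈F'} p_f, where the sum ranges over all minimal fact covers F' ⊆ F of A (each minimal fact cover is a finite set, and there are at most countably many of them). -/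
/-!
Every realisation `I(ω)` that covers `A` already contains a minimal fact cover: pick one fact
per element of `A` to get a finite subcover, then shrink it to a minimal one. Hence the
covering event lies in the countable union, over minimal fact covers `C`, of the events
`⋂ f ∈ C, E f`, and by independence each of these has probability `∏ f ∈ C, p f`.
-/

open MeasureTheory ProbabilityTheory ENNReal

/-- `F'` is a fact cover of the finite set `A`. -/
def IsFactCover {F α : Type*} (s : F → Finset α) (A : Finset α) (F' : Set F) : Prop :=
  ∀ a ∈ A, ∃ f ∈ F', a ∈ s f

/-- `F'` is a minimal fact cover of `A`. -/
def IsMinimalFactCover {F α : Type*} (s : F → Finset α) (A : Finset α) (F' : Set F) : Prop :=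
  IsFactCover s A F' ∧ ∀ F'' : Set F, F'' ⊂ F' → ¬ IsFactCover s A F''

namespace IsFactCover

variable {F α : Type*} {s : F → Finset α} {A : Finset α}

lemma exists_finset_subset {S : Set F} (h : IsFactCover s A S) :
    ∃ C : Finset F, ↑C ⊆ S ∧ IsFactCover s A ↑C := by
  classical
  choose g hgS hgs using h
  refine ⟨A.attach.image fun a : {x // x ∈ A} => g a a.2, ?_, fun a ha => ⟨g a ha, ?_, hgs a ha⟩⟩
  · intro f hf
    obtain ⟨a, -, rfl⟩ := Finset.mem_image.1 hf
    exact hgS a a.2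
  · exact Finset.mem_image_of_mem _ (Finset.mem_attach A ⟨a, ha⟩)

lemma exists_isMinimalFactCover_subset_of_finite {S : Set F} (hS : S.Finite)
    (h : IsFactCover s A S) : ∃ T ⊆ S, IsMinimalFactCover s A T := by
  obtain ⟨T, hTS, hT⟩ := Set.Finite.exists_le_minimal
    (hS.finite_subsets.subset fun T (hT : T ⊆ S ∧ IsFactCover s A T) => hT.1) ⟨subset_rfl, h⟩
  refine ⟨T, hTS, hT.prop.2, fun U hUT hU => hUT.not_ge ?_⟩
  exact hT.le_of_le ⟨hUT.le.trans hTS, hU⟩ hUT.le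

lemma exists_isMinimalFactCover_finset_subset {S : Set F} (h : IsFactCover s A S) :
    ∃ C : Finset F, ↑C ⊆ S ∧ IsMinimalFactCover s A ↑C := by
  obtain ⟨C, hCS, hC⟩ := h.exists_finset_subset
  obtain ⟨T, hTC, hT⟩ := exists_isMinimalFactCover_subset_of_finite C.finite_toSet hC
  have hTfin : T.Finite := C.finite_toSet.subset hTC
  exact ⟨hTfin.toFinset, by simpa using hTC.trans hCS, by simpa using hT⟩

end IsFactCover

lemma setOf_isFactCover_subset_iUnion_minimal {Ω F α : Type*} (E : F → Set Ω)
    (A : Finset α) (s : F → Finset α) :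
    {ω | IsFactCover s A {f | ω ∈ E f}} ⊆
      ⋃ C : {C : Finset F // IsMinimalFactCover s A (↑C : Set F)}, ⋂ f ∈ (C : Finset F), E f := by
  intro ω hω
  obtain ⟨C, hCI, hC⟩ := IsFactCover.exists_isMinimalFactCover_finset_subset hω
  exact Set.mem_iUnion.2 ⟨⟨C, hC⟩, Set.mem_iInter₂.2 fun f hf => hCI hf⟩

theorem prob_factCover_le_sum_minimal_factCovers_general
    {Ω F α : Type*} [MeasurableSpace Ω] [Countable F]
    (P : Measure Ω)
    (E : F → Set Ω)
    (hindep : iIndepSet E P)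
    (p : F → ℝ≥0∞) (hp : ∀ f, P (E f) = p f)
    (A : Finset α) (s : F → Finset α) :
    P {ω | IsFactCover s A {f | ω ∈ E f}} ≤
      ∑' C : {C : Finset F // IsMinimalFactCover s A (↑C : Set F)},
        ∏ f ∈ (C : Finset F), p f :=
  calc P {ω | IsFactCover s A {f | ω ∈ E f}}
      ≤ P (⋃ C : {C : Finset F // IsMinimalFactCover s A (↑C : Set F)},
            ⋂ f ∈ (C : Finset F), E f) :=
        measure_mono (setOf_isFactCover_subset_iUnion_minimal E A s)
    _ ≤ ∑' C : {C : Finset F // IsMinimalFactCover s A (↑C : Set F)},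
          P (⋂ f ∈ (C : Finset F), E f) := measure_iUnion_le _
    _ = ∑' C : {C : Finset F // IsMinimalFactCover s A (↑C : Set F)},
          ∏ f ∈ (C : Finset F), p f := by
        simp only [hindep.meas_biInter, hp]

/-- Let `(Ω, P)` be a probability space, `F` a countable set and
`(E f)_{f ∈ F}` a mutually independent family of events with `P (E f) = p f`. Let `A` be
a finite set and `s : F → Finset A`. Writing `I(ω) = {f | ω ∈ E f}`, the probability that
`I(ω)` is a fact cover of `A` is at most the sum, over all minimal fact covers `F'` of `A`
(each a finite set, and there are at most countably many), of `∏_{f ∈ F'} p f`. -/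
theorem prob_factCover_le_sum_minimal_factCovers
    {Ω F α : Type*} [MeasurableSpace Ω] [Countable F]
    (P : Measure Ω) [IsProbabilityMeasure P]
    (E : F → Set Ω) (hmeas : ∀ f, MeasurableSet (E f))
    (hindep : iIndepSet E P)
    (p : F → ℝ≥0∞) (hp : ∀ f, P (E f) = p f)
    (A : Finset α) (s : F → Finset α) :
    P {ω | IsFactCover s A {f | ω ∈ E f}} ≤
      ∑' C : {C : Finset F // IsMinimalFactCover s A (↑C : Set F)},
        ∏ f ∈ (C : Finset F), p f :=
  prob_factCover_le_sum_minimal_factCovers_general P E hindep p hp A s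
end

section
/- Let (Ω, P) be a probability space, F a countable set, and (E_f)_{f∈F} a mutually independent family of events with P(E_f) = p_f. Let r ≥ 1 be an integer, let A be a finite set with |A| = n ≥ 1, and let s : F → Finset A satisfy ∅ ≠ s(f) and |s(f)| ≤ r for every f ∈ F. For ω ∈ Ω write I(ω) = {f ∈ F : ω ∈ E_f}. Then P({ω : A ⊆ ⋃_{f∈I(ω)} s(f)}) ≤ n · (r² · n^{r−1} · Σ_{f∈F} p_f)^{n/r}, where the exponent n/r is a real number. -/
open MeasureTheory ProbabilityTheory ENNReal

/-!
If the facts holding at `ω` cover `A` and each fact covers at most `r` elements, then at least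
`m = ⌈n / r⌉` distinct events `E f` occur at `ω`. A union bound over injective `m`-tuples of facts,
together with independence, bounds this by `(∑ p f) ^ m`. As a probability is also at most `1`,
this yields `(∑ p f) ^ (n / r)` whether or not `∑ p f ≤ 1`, and the extra factors `n` and
`r² n^(r-1)` are at least `1`.
-/

theorem ENNReal.tsum_fin_pi_prod_eq_pow {β : Type*} (p : β → ℝ≥0∞) (m : ℕ) :
    ∑' g : Fin m → β, ∏ i, p (g i) = (∑' b, p b) ^ m := by
  induction m with
  | zero => simp
  | succ m ih =>
    calc ∑' g : Fin (m + 1) → β, ∏ i, p (g i)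
        = ∑' x : β × (Fin m → β), p x.1 * ∏ i, p (x.2 i) := by
          rw [← (Fin.consEquiv fun _ ↦ β).tsum_eq]
          simp [Fin.consEquiv, Fin.prod_univ_succ]
      _ = (∑' b, p b) ^ (m + 1) := by
          simp_rw [ENNReal.tsum_prod', ENNReal.tsum_mul_left, ENNReal.tsum_mul_right, ih, pow_succ']

theorem ENNReal.le_rpow_of_le_one_of_le_pow {x q : ℝ≥0∞} {m : ℕ} {t : ℝ} (hx : x ≤ 1)
    (hxq : x ≤ q ^ m) (ht : 0 < t) (htm : t ≤ m) : x ≤ q ^ t := by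
  rcases le_total q 1 with hq | hq
  · calc x ≤ q ^ (m : ℝ) := by rwa [ENNReal.rpow_natCast]
      _ ≤ q ^ t := ENNReal.rpow_le_rpow_of_exponent_ge hq htm
  · exact hx.trans (ENNReal.one_le_rpow hq ht)

theorem Finset.exists_finset_forall_subset_biUnion {α β : Type*} [DecidableEq α] [DecidableEq β]
    {A : Finset α} {s : β → Finset α} {q : β → Prop} (h : ∀ a ∈ A, ∃ b, q b ∧ a ∈ s b) :
    ∃ T : Finset β, (∀ b ∈ T, q b) ∧ A ⊆ T.biUnion s := by
  choose g hgq hgs using h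
  refine ⟨A.attach.image fun a ↦ g a.1 a.2, ?_, fun a ha ↦ ?_⟩
  · simp only [Finset.mem_image, forall_exists_index, and_imp]
    rintro _ a - rfl
    exact hgq a a.2
  · exact Finset.mem_biUnion.2 ⟨g a ha, Finset.mem_image_of_mem _ (Finset.mem_attach _ ⟨a, ha⟩),
      hgs a ha⟩

namespace ProbabilityTheory

variable {Ω ι : Type*} [MeasurableSpace Ω] {μ : Measure Ω} {E : ι → Set Ω}

theorem iIndepSet.measure_iInter_comp_of_injective {κ : Type*} [Fintype κ] (h : iIndepSet E μ)
    {g : κ → ι} (hg : g.Injective) : μ (⋂ k, E (g k)) = ∏ k, μ (E (g k)) := by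
  simpa using (h.precomp hg).meas_biInter Finset.univ

theorem iIndepSet.measure_exists_card_ge_le_tsum_pow [Countable ι] (h : iIndepSet E μ) (m : ℕ) :
    μ {ω | ∃ T : Finset ι, m ≤ T.card ∧ ∀ i ∈ T, ω ∈ E i} ≤ (∑' i, μ (E i)) ^ m := by
  have hsub : {ω | ∃ T : Finset ι, m ≤ T.card ∧ ∀ i ∈ T, ω ∈ E i} ⊆
      ⋃ g : {g : Fin m → ι // g.Injective}, ⋂ k, E (g.1 k) := by
    rintro ω ⟨T, hmT, hTE⟩
    obtain ⟨e⟩ := Function.Embedding.nonempty_of_card_le (α := Fin m) (β := T) (by simpa using hmT)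
    exact Set.mem_iUnion.2 ⟨⟨_, Subtype.val_injective.comp e.injective⟩,
      Set.mem_iInter.2 fun k ↦ hTE _ (e k).2⟩
  calc μ {ω | ∃ T : Finset ι, m ≤ T.card ∧ ∀ i ∈ T, ω ∈ E i}
      ≤ ∑' g : {g : Fin m → ι // g.Injective}, μ (⋂ k, E (g.1 k)) :=
        (measure_mono hsub).trans (measure_iUnion_le _)
    _ = ∑' g : {g : Fin m → ι // g.Injective}, ∏ k, μ (E (g.1 k)) :=
        tsum_congr fun g ↦ h.measure_iInter_comp_of_injective g.2
    _ ≤ ∑' g : Fin m → ι, ∏ k, μ (E (g k)) :=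
        ENNReal.tsum_comp_le_tsum_of_injective Subtype.val_injective _
    _ = (∑' i, μ (E i)) ^ m := ENNReal.tsum_fin_pi_prod_eq_pow (fun i ↦ μ (E i)) m

end ProbabilityTheory

theorem prob_cover_le_general
    {Ω F α : Type*} [MeasurableSpace Ω] [Countable F]
    (P : Measure Ω) [IsProbabilityMeasure P]
    (E : F → Set Ω)
    (hindep : iIndepSet E P)
    (p : F → ℝ≥0∞) (hp : ∀ f, P (E f) = p f)
    (r : ℕ) (hr : 1 ≤ r)
    (A : Finset α) (n : ℕ) (hn : A.card = n) (hn1 : 1 ≤ n)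
    (s : F → Finset α) (hcard : ∀ f, (s f).card ≤ r) :
    P {ω | ∀ a ∈ A, ∃ f, ω ∈ E f ∧ a ∈ s f} ≤
      (n : ℝ≥0∞) *
        ((r : ℝ≥0∞) ^ 2 * (n : ℝ≥0∞) ^ (r - 1) * ∑' f, p f) ^ ((n : ℝ) / (r : ℝ)) := by
  classical
  have hcover : {ω | ∀ a ∈ A, ∃ f, ω ∈ E f ∧ a ∈ s f} ⊆
      {ω | ∃ T : Finset F, n ⌈/⌉ r ≤ T.card ∧ ∀ f ∈ T, ω ∈ E f} := by
    intro ω hω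
    obtain ⟨T, hTE, hAT⟩ := Finset.exists_finset_forall_subset_biUnion hω
    refine ⟨T, (ceilDiv_le_iff_le_mul hr).2 ?_, hTE⟩
    calc n = A.card := hn.symm
      _ ≤ (T.biUnion s).card := Finset.card_le_card hAT
      _ ≤ T.card * r := Finset.card_biUnion_le_card_mul _ _ _ fun f _ ↦ hcard f
      _ = r * T.card := mul_comm _ _
  have hexp : (n : ℝ) / r ≤ (n ⌈/⌉ r : ℕ) := by
    rw [div_le_iff₀ (by exact_mod_cast hr), mul_comm]
    exact_mod_cast (ceilDiv_le_iff_le_mul hr).1 le_rfl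
  have hcoef : 1 ≤ (r : ℝ≥0∞) ^ 2 * (n : ℝ≥0∞) ^ (r - 1) :=
    one_le_mul (one_le_pow₀ (by exact_mod_cast hr)) (one_le_pow₀ (by exact_mod_cast hn1))
  have hexp_pos : (0 : ℝ) < n / r := by positivity
  calc P {ω | ∀ a ∈ A, ∃ f, ω ∈ E f ∧ a ∈ s f} ≤ (∑' f, p f) ^ ((n : ℝ) / r) := by
        refine ENNReal.le_rpow_of_le_one_of_le_pow prob_le_one ?_ hexp_pos hexp
        simpa only [hp] using
          (measure_mono hcover).trans (hindep.measure_exists_card_ge_le_tsum_pow _)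
    _ ≤ ((r : ℝ≥0∞) ^ 2 * (n : ℝ≥0∞) ^ (r - 1) * ∑' f, p f) ^ ((n : ℝ) / r) :=
        ENNReal.rpow_le_rpow (le_mul_of_one_le_left' hcoef) hexp_pos.le
    _ ≤ _ := le_mul_of_one_le_left' (by exact_mod_cast hn1)

/-- Let `(Ω, P)` be a probability space, `F` a countable set and
`(E f)_{f ∈ F}` mutually independent events with `P (E f) = p f`. Let `r ≥ 1`, let `A` be
a finite set with `|A| = n ≥ 1`, and let `s : F → Finset A` satisfy `∅ ≠ s f` and
`|s f| ≤ r` for all `f`. Then the probability that the random set of facts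
`I(ω) = {f | ω ∈ E f}` covers `A` is at most
`n · (r² · n^{r-1} · ∑_f p f) ^ (n/r)` (real exponent `n/r`). -/
theorem prob_cover_le
    {Ω F α : Type*} [MeasurableSpace Ω] [Countable F]
    (P : Measure Ω) [IsProbabilityMeasure P]
    (E : F → Set Ω) (hmeas : ∀ f, MeasurableSet (E f))
    (hindep : iIndepSet E P)
    (p : F → ℝ≥0∞) (hp : ∀ f, P (E f) = p f)
    (r : ℕ) (hr : 1 ≤ r)
    (A : Finset α) (n : ℕ) (hn : A.card = n) (hn1 : 1 ≤ n)
    (s : F → Finset α) (hne : ∀ f, s f ≠ ∅) (hcard : ∀ f, (s f).card ≤ r) :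
    P {ω | ∀ a ∈ A, ∃ f, ω ∈ E f ∧ a ∈ s f} ≤
      (n : ℝ≥0∞) *
        ((r : ℝ≥0∞) ^ 2 * (n : ℝ≥0∞) ^ (r - 1) * ∑' f, p f) ^ ((n : ℝ) / (r : ℝ)) :=
  prob_cover_le_general P E hindep p hp r hr A n hn hn1 s hcard
end

section
/- Let (s_i)_{i∈ℕ} be a sequence of positive integers and (p_i)_{i∈ℕ} a sequence in [0,1] with Σ_{i} p_i ≤ 1. Then the following are equivalent: (1) there exists a positive integer c such that Σ_{i} ⌈s_i/c⌉ · p_i^{1/⌈s_i/c⌉} < ∞; (2) there exists a positive integer c such that Σ_{i} s_i · p_i^{c/s_i} < ∞. (All exponents are real numbers.) -/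
/-!
Both sums are built from `g t = t * p ^ (1 / t)`, which is monotone in `t ≥ 0` when
`0 ≤ p ≤ 1`: the terms of (1) are `g ⌈s / c⌉` and those of (2) are `c * g (s / c)`.
Rounding `s / c` up only increases the terms, which gives (1) ⇒ (2) with the same `c`.
Conversely `⌈x⌉ ≤ max 1 (2 x)`, so with `2 c` in place of `c` every term of (1) is at most
`g 1 + g (s / c) = p + s * p ^ (c / s) / c`, and `p` is summable.
-/

open Real

section SegmentWeight

variable {p : ℝ}

theorem monotoneOn_mul_rpow_one_div (hp0 : 0 ≤ p) (hp1 : p ≤ 1) :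
    MonotoneOn (fun t : ℝ => t * p ^ (1 / t)) (Set.Ici 0) := by
  intro a ha b hb hab
  rcases (Set.mem_Ici.mp ha).eq_or_lt with rfl | ha
  · simpa using mul_nonneg hb (rpow_nonneg hp0 _)
  · have hexp : 1 / b ≤ 1 / a := one_div_le_one_div_of_le ha hab
    exact mul_le_mul hab (rpow_le_rpow_of_exponent_ge' hp0 hp1 (one_div_nonneg.mpr hb) hexp)
      (rpow_nonneg hp0 _) hb

theorem mul_rpow_div_eq (a : ℝ) {c : ℝ} (hc : c ≠ 0) :
    a * p ^ (c / a) = c * (a / c * p ^ (1 / (a / c))) := by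
  rw [one_div_div, ← mul_assoc, mul_div_cancel₀ a hc]

theorem natCeil_le_max_one_two_mul (x : ℝ) : (⌈x⌉₊ : ℝ) ≤ max 1 (2 * x) := by
  rcases le_or_gt x 2⁻¹ with hx | hx
  · exact le_max_of_le_left (by exact_mod_cast Nat.ceil_le.mpr (by norm_num; linarith))
  · exact le_max_of_le_right (Nat.ceil_le_two_mul hx.le)

theorem natCeil_mul_rpow_one_div_le (hp0 : 0 ≤ p) (hp1 : p ≤ 1) {x : ℝ} (hx : 0 ≤ x) :
    (⌈x⌉₊ : ℝ) * p ^ (1 / (⌈x⌉₊ : ℝ)) ≤ p + 2 * x * p ^ (1 / (2 * x)) := by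
  have hmono := monotoneOn_mul_rpow_one_div hp0 hp1
  have h2x : (0 : ℝ) ≤ 2 * x := by positivity
  calc (⌈x⌉₊ : ℝ) * p ^ (1 / (⌈x⌉₊ : ℝ))
      ≤ max 1 (2 * x) * p ^ (1 / max 1 (2 * x)) :=
        hmono (Set.mem_Ici.mpr (Nat.cast_nonneg _)) (le_max_of_le_right h2x)
          (natCeil_le_max_one_two_mul x)
    _ ≤ p + 2 * x * p ^ (1 / (2 * x)) := by
        have hg : 0 ≤ 2 * x * p ^ (1 / (2 * x)) := mul_nonneg h2x (rpow_nonneg hp0 _)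
        rcases max_cases 1 (2 * x) with ⟨h, -⟩ | ⟨h, -⟩ <;> rw [h]
        · simpa using hg
        · linarith

end SegmentWeight

theorem ceil_segment_condition_iff_general
    (s : ℕ → ℕ)
    (p : ℕ → ℝ) (hp0 : ∀ i, 0 ≤ p i) (hp1 : ∀ i, p i ≤ 1)
    (hpsum : Summable p) :
    (∃ c : ℕ, 0 < c ∧
        Summable fun i =>
          (⌈(s i : ℝ) / (c : ℝ)⌉₊ : ℝ) * p i ^ ((1 : ℝ) / (⌈(s i : ℝ) / (c : ℝ)⌉₊ : ℝ))) ↔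
      (∃ c : ℕ, 0 < c ∧
        Summable fun i => (s i : ℝ) * p i ^ ((c : ℝ) / (s i : ℝ))) := by
  constructor
  · rintro ⟨c, hc, hsum⟩
    have hc0 : (c : ℝ) ≠ 0 := by positivity
    refine ⟨c, hc, (hsum.mul_left (c : ℝ)).of_nonneg_of_le
      (fun i => mul_nonneg (Nat.cast_nonneg _) (rpow_nonneg (hp0 i) _)) fun i => ?_⟩
    rw [mul_rpow_div_eq _ hc0]
    refine mul_le_mul_of_nonneg_left ?_ (Nat.cast_nonneg _)
    exact monotoneOn_mul_rpow_one_div (hp0 i) (hp1 i) (Set.mem_Ici.mpr (by positivity))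
      (Set.mem_Ici.mpr (Nat.cast_nonneg _)) (Nat.le_ceil _)
  · rintro ⟨c, hc, hsum⟩
    have hc0 : (c : ℝ) ≠ 0 := by positivity
    refine ⟨2 * c, by positivity, (hpsum.add (hsum.mul_left (c : ℝ)⁻¹)).of_nonneg_of_le
      (fun i => mul_nonneg (Nat.cast_nonneg _) (rpow_nonneg (hp0 i) _)) fun i => ?_⟩
    have htwo : 2 * ((s i : ℝ) / ((2 * c : ℕ) : ℝ)) = s i / c := by
      push_cast; field_simp
    rw [mul_rpow_div_eq _ hc0, inv_mul_cancel_left₀ hc0, ← htwo]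
    exact natCeil_mul_rpow_one_div_le (hp0 i) (hp1 i) (by positivity)

/-- Let `(s i)` be positive integers and `(p i)` a `[0,1]`-valued
sequence with `∑ i, p i ≤ 1`. Then the following are equivalent:
(1) there is a positive integer `c` with `∑ i, ⌈s i / c⌉ · (p i)^(1/⌈s i / c⌉) < ∞`;
(2) there is a positive integer `c` with `∑ i, s i · (p i)^(c / s i) < ∞`.
(All exponents are real.) -/
theorem ceil_segment_condition_iff
    (s : ℕ → ℕ) (hs : ∀ i, 1 ≤ s i)
    (p : ℕ → ℝ) (hp0 : ∀ i, 0 ≤ p i) (hp1 : ∀ i, p i ≤ 1)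
    (hpsum : Summable p) (hple : ∑' i, p i ≤ 1) :
    (∃ c : ℕ, 0 < c ∧
        Summable fun i =>
          (⌈(s i : ℝ) / (c : ℝ)⌉₊ : ℝ) * p i ^ ((1 : ℝ) / (⌈(s i : ℝ) / (c : ℝ)⌉₊ : ℝ))) ↔
      (∃ c : ℕ, 0 < c ∧
        Summable fun i => (s i : ℝ) * p i ^ ((c : ℝ) / (s i : ℝ))) :=
  ceil_segment_condition_iff_general s p hp0 hp1 hpsum
end

section
/- Let (p_i)_{i∈ℕ} be nonnegative reals with Σ_{i} p_i = 1, and let (A_i)_{i∈ℕ} be a mutually independent family of events on a probability space with P(A_i) = p_i/(1+p_i). Let Z = ∏_{i=0}^∞ (1 − p_i/(1+p_i)) (the limit of the partial products). Then Z > 0; for each i, the probability that A_i occurs and no A_j with j ≠ i occurs equals Z·p_i; the probability that exactly one of the events A_i occurs equals Z; and hence, conditioned on exactly one of the events occurring, the probability that A_i is the occurring event equals p_i. -/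
/-!
Let `N = ⋂ j, (A j)ᶜ` be the event that no `A j` occurs. Since `A i` is independent of "no `A j`
with `j ≠ i`", `P(only A i) · P(A iᶜ) = P(A i) · P(N)`, and the rescaling `p ↦ p / (1 + p)` is
exactly the one whose odds `P(A i) / P(A iᶜ)` equal `p i`; hence `P(only A i) = p i · P(N)`.
Continuity from above identifies `P(N)` with the infinite product `Z`, which is at least
`exp (-∑ p) = e⁻¹` because `1 + x ≤ exp x`. Summing over `i` gives `P(exactly one) = Z`.
-/

open MeasureTheory ProbabilityTheory ENNReal Filter Topology Function

namespace ProbabilityTheory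

variable {Ω ι : Type*} {mΩ : MeasurableSpace Ω} {μ : Measure Ω} {A : ι → Set Ω}

def onlyAt (A : ι → Set Ω) (i : ι) : Set Ω := {ω | ω ∈ A i ∧ ∀ j, j ≠ i → ω ∉ A j}

theorem onlyAt_eq_inter_biInter_compl (A : ι → Set Ω) (i : ι) :
    onlyAt A i = A i ∩ ⋂ j ∈ ({i}ᶜ : Set ι), (A j)ᶜ := by
  ext ω
  simp [onlyAt]

theorem iInter_compl_eq_compl_inter_biInter_compl (A : ι → Set Ω) (i : ι) :
    ⋂ j, (A j)ᶜ = (A i)ᶜ ∩ ⋂ j ∈ ({i}ᶜ : Set ι), (A j)ᶜ := by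
  ext ω
  simp only [Set.mem_iInter, Set.mem_inter_iff, Set.mem_compl_singleton_iff]
  refine ⟨fun h => ⟨h i, fun j _ => h j⟩, fun h j => ?_⟩
  by_cases hj : j = i
  · exact hj ▸ h.1
  · exact h.2 j hj

theorem pairwise_disjoint_onlyAt (A : ι → Set Ω) : Pairwise (Disjoint on onlyAt A) :=
  fun _ j hij => Set.disjoint_left.2 fun _ hi hj => hi.2 j (Ne.symm hij) hj.1

theorem iUnion_onlyAt (A : ι → Set Ω) : ⋃ i, onlyAt A i = {ω | ∃! i, ω ∈ A i} := by
  ext ω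
  simp only [onlyAt, Set.mem_iUnion, Set.mem_ofPred_eq, ExistsUnique]
  exact exists_congr fun i => and_congr_right fun _ =>
    ⟨fun h j hj => not_not.1 fun hji => h j hji hj, fun h j hji hj => hji (h j hj)⟩

theorem measurableSet_onlyAt [Countable ι] (hA : ∀ i, MeasurableSet (A i)) (i : ι) :
    MeasurableSet (onlyAt A i) := by
  rw [onlyAt_eq_inter_biInter_compl]
  exact (hA i).inter (.biInter (Set.to_countable _) fun j _ => (hA j).compl)

theorem measure_setOf_existsUnique_mem [Countable ι] (hA : ∀ i, MeasurableSet (A i)) :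
    μ {ω | ∃! i, ω ∈ A i} = ∑' i, μ (onlyAt A i) := by
  rw [← iUnion_onlyAt, measure_iUnion (pairwise_disjoint_onlyAt A) (measurableSet_onlyAt hA)]

theorem iIndepSet.measure_inter_biInter_compl [Countable ι] (h : iIndepSet A μ)
    (hA : ∀ i, MeasurableSet (A i)) (i : ι) {t : Set Ω}
    (ht : MeasurableSet[MeasurableSpace.generateFrom {A i}] t) :
    μ (t ∩ ⋂ j ∈ ({i}ᶜ : Set ι), (A j)ᶜ) = μ t * μ (⋂ j ∈ ({i}ᶜ : Set ι), (A j)ᶜ) := by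
  have hle : ∀ j, MeasurableSpace.generateFrom {A j} ≤ mΩ := fun j =>
    MeasurableSpace.generateFrom_le fun _ hs => hs ▸ hA j
  have hind := indep_iSup_of_disjoint hle ((iIndepSet_iff_iIndep A μ).1 h)
    (disjoint_compl_right (a := ({i} : Set ι)))
  refine (Indep_iff _ _ μ).1 hind _ _ ?_ ?_
  · exact le_iSup₂ (f := fun j (_ : j ∈ ({i} : Set ι)) => MeasurableSpace.generateFrom {A j})
      i rfl _ ht
  · refine .biInter (Set.to_countable _) fun j hj => .compl ?_
    exact le_iSup₂ (f := fun j (_ : j ∈ ({i}ᶜ : Set ι)) => MeasurableSpace.generateFrom {A j})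
      j hj _ (MeasurableSpace.measurableSet_generateFrom rfl)

theorem iIndepSet.measure_onlyAt_mul_measure_compl [Countable ι] (h : iIndepSet A μ)
    (hA : ∀ i, MeasurableSet (A i)) (i : ι) :
    μ (onlyAt A i) * μ (A i)ᶜ = μ (A i) * μ (⋂ j, (A j)ᶜ) := by
  have hAi := MeasurableSpace.measurableSet_generateFrom (s := {A i}) rfl
  rw [onlyAt_eq_inter_biInter_compl, iInter_compl_eq_compl_inter_biInter_compl A i,
    h.measure_inter_biInter_compl hA i hAi, h.measure_inter_biInter_compl hA i hAi.compl]
  ring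

theorem iIndepSet.measure_onlyAt [Countable ι] (h : iIndepSet A μ)
    (hA : ∀ i, MeasurableSet (A i)) (i : ι) (hAi : μ (A i)ᶜ ≠ 0) :
    μ (onlyAt A i) = μ (A i) / μ (A i)ᶜ * μ (⋂ j, (A j)ᶜ) := by
  have := h.isProbabilityMeasure
  rw [← ENNReal.mul_div_right_comm, ← h.measure_onlyAt_mul_measure_compl hA,
    ENNReal.mul_div_cancel_right hAi (measure_ne_top μ _)]

theorem iIndepSet.tendsto_prod_measure_compl {A : ℕ → Set Ω} (h : iIndepSet A μ)
    (hA : ∀ i, MeasurableSet (A i)) :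
    Tendsto (fun n => ∏ j ∈ Finset.range n, μ (A j)ᶜ) atTop (𝓝 (μ (⋂ j, (A j)ᶜ))) := by
  have := h.isProbabilityMeasure
  have hprod (n : ℕ) : μ (⋂ j ≤ n, (A j)ᶜ) = ∏ j ∈ Finset.range (n + 1), μ (A j)ᶜ := by
    rw [← (iIndepSet_iff A μ).1 h _ fun j _ =>
      (MeasurableSpace.measurableSet_generateFrom (Set.mem_singleton _)).compl]
    simp [Finset.mem_range]
  rw [← tendsto_add_atTop_iff_nat 1]
  simpa only [hprod] using
    tendsto_measure_iInter_le (μ := μ) (fun j => (hA j).compl.nullMeasurableSet)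
      ⟨0, measure_ne_top μ _⟩

end ProbabilityTheory

theorem Real.exp_neg_tsum_le_prod_inv_one_add {ι : Type*} {p : ι → ℝ} (hp0 : ∀ i, 0 ≤ p i)
    (hp : Summable p) (s : Finset ι) : Real.exp (-∑' i, p i) ≤ ∏ i ∈ s, (1 + p i)⁻¹ := by
  rw [Finset.prod_inv_distrib, Real.exp_neg]
  gcongr
  · exact Finset.prod_pos fun i _ => by linarith [hp0 i]
  · exact (Real.prod_one_add_le_exp_sum s hp0).trans
      (Real.exp_le_exp.2 (hp.sum_le_tsum s fun i _ => hp0 i))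

theorem ENNReal.one_sub_ofReal_div_one_add {x : ℝ} (hx : 0 ≤ x) :
    1 - ENNReal.ofReal (x / (1 + x)) = ENNReal.ofReal (1 + x)⁻¹ := by
  have hx1 : 1 + x ≠ 0 := by positivity
  rw [← ENNReal.ofReal_one, ← ENNReal.ofReal_sub _ (by positivity)]
  congr 1
  field_simp
  ring

theorem ENNReal.ofReal_div_one_add_div_ofReal_inv_one_add {x : ℝ} (hx : 0 ≤ x) :
    ENNReal.ofReal (x / (1 + x)) / ENNReal.ofReal (1 + x)⁻¹ = ENNReal.ofReal x := by
  have hx1 : 1 + x ≠ 0 := by positivity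
  rw [← ENNReal.ofReal_div_of_pos (by positivity)]
  congr 1
  field_simp

/-- Let `(p i)` be nonnegative reals with `∑ i, p i = 1`, and `(A i)`
a mutually independent family of events with `P (A i) = p i / (1 + p i)`. Let
`Z = ∏_{i} (1 - p i / (1 + p i))` (limit of the partial products). Then `Z > 0`; the
probability that `A i` occurs and no other `A j` occurs is `Z · p i`; the probability
that exactly one of the events occurs is `Z`; hence conditioned on exactly one event
occurring, the probability that it is `A i` equals `p i`. -/
theorem rescaled_marginals_conditioning
    {Ω : Type*} [MeasurableSpace Ω] (P : Measure Ω) [IsProbabilityMeasure P]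
    (p : ℕ → ℝ) (hp0 : ∀ i, 0 ≤ p i) (hpsum : Summable p) (hp1 : ∑' i, p i = 1)
    (A : ℕ → Set Ω) (hA : ∀ i, MeasurableSet (A i)) (hindep : iIndepSet A P)
    (hPA : ∀ i, P (A i) = ENNReal.ofReal (p i / (1 + p i)))
    (Z : ℝ≥0∞)
    (hZ : Tendsto (fun n => ∏ i ∈ Finset.range n, (1 - ENNReal.ofReal (p i / (1 + p i))))
      atTop (nhds Z)) :
    0 < Z ∧
      (∀ i, P {ω | ω ∈ A i ∧ ∀ j, j ≠ i → ω ∉ A j} = Z * ENNReal.ofReal (p i)) ∧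
      P {ω | ∃! i, ω ∈ A i} = Z ∧
      (∀ i, P {ω | ω ∈ A i ∧ ∀ j, j ≠ i → ω ∉ A j} / P {ω | ∃! i, ω ∈ A i} =
        ENNReal.ofReal (p i)) := by
  have hcompl (i : ℕ) : P (A i)ᶜ = ENNReal.ofReal (1 + p i)⁻¹ := by
    rw [prob_compl_eq_one_sub (hA i), hPA, ENNReal.one_sub_ofReal_div_one_add (hp0 i)]
  have hnone : P (⋂ j, (A j)ᶜ) = Z := by
    refine tendsto_nhds_unique (hindep.tendsto_prod_measure_compl hA) ?_
    simpa only [hcompl, ENNReal.one_sub_ofReal_div_one_add (hp0 _)] using hZ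
  have hZpos : 0 < Z := by
    refine (ENNReal.ofReal_pos.2 (Real.exp_pos (-1))).trans_le
      (ge_of_tendsto hZ (.of_forall fun n => ?_))
    have hbound := Real.exp_neg_tsum_le_prod_inv_one_add hp0 hpsum (Finset.range n)
    rw [hp1] at hbound
    simp only [ENNReal.one_sub_ofReal_div_one_add (hp0 _)]
    exact (ENNReal.ofReal_le_ofReal hbound).trans_eq
      (ENNReal.ofReal_prod_of_nonneg fun j _ => inv_nonneg.2 (add_nonneg zero_le_one (hp0 j)))
  have honly (i : ℕ) : P (onlyAt A i) = Z * ENNReal.ofReal (p i) := by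
    rw [hindep.measure_onlyAt hA i (by simp [hcompl]; linarith [hp0 i]), hPA, hcompl,
      ENNReal.ofReal_div_one_add_div_ofReal_inv_one_add (hp0 i), hnone, mul_comm]
  have hunique : P {ω | ∃! i, ω ∈ A i} = Z := by
    rw [measure_setOf_existsUnique_mem hA, tsum_congr honly, ENNReal.tsum_mul_left,
      ← ENNReal.ofReal_tsum_of_nonneg hp0 hpsum, hp1, ENNReal.ofReal_one, mul_one]
  refine ⟨hZpos, honly, hunique, fun i => ?_⟩
  change P (onlyAt A i) / _ = _
  rw [honly, hunique, mul_comm,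
    ENNReal.mul_div_cancel_right hZpos.ne' (hnone ▸ measure_ne_top P _)]
end

section
/- Let (p_j)_{j∈ℕ} be nonnegative reals with Σ_j p_j < 1, set r = 1 − Σ_j p_j, and let (A_j)_{j∈ℕ} be a mutually independent family of events on a probability space with P(A_j) = p_j/(r+p_j). Let Z = ∏_{j=0}^∞ (1 − p_j/(r+p_j)) (the limit of the partial products). Then Z > 0; P(no A_j occurs) = Z; for each j, P(A_j occurs and no other A_{j'} occurs) = Z·p_j/r; P(at most one of the A_j occurs) = Z/r; and hence, conditioned on at most one event occurring, the probability that no event occurs is r and the probability that exactly A_j occurs is p_j. -/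
/-! Independence makes the probability that no `A j` occurs the infinite product `Z` of the
`1 - p j / (r + p j) = r / (r + p j)`. Since `A j` and its complement are both independent of
"no other `A i` occurs", the probability that exactly `A j` occurs is `Z` times the odds of `A j`,
which are `p j / r`. As `r + ∑ p j = 1`, summing gives
`P(at most one) = Z (1 + ∑ p j / r) = Z / r`. Finally `Z > 0` since
`r / (r + p j) ≥ exp (-p j / r)` and `∑ p j` is finite. -/

open MeasureTheory ProbabilityTheory ENNReal Filter

namespace ProbabilityTheory

open Set Function

variable {Ω ι : Type*} {mΩ : MeasurableSpace Ω}

def noneOf (A : ι → Set Ω) : Set Ω := {ω | ∀ j, ω ∉ A j}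

def exactlyOne (A : ι → Set Ω) (j : ι) : Set Ω := {ω | ω ∈ A j ∧ ∀ j', j' ≠ j → ω ∉ A j'}

def atMostOne (A : ι → Set Ω) : Set Ω := {ω | ∀ j j', ω ∈ A j → ω ∈ A j' → j = j'}

lemma noneOf_eq_iInter_compl (A : ι → Set Ω) : noneOf A = ⋂ j, (A j)ᶜ := by
  ext ω; simp [noneOf]

lemma noneOf_eq_compl_inter (A : ι → Set Ω) (j : ι) :
    noneOf A = (A j)ᶜ ∩ ⋂ i ∈ ({j}ᶜ : Set ι), (A i)ᶜ := by
  ext ω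
  simp only [noneOf, mem_ofPred_eq, mem_inter_iff, mem_compl_iff, mem_iInter, mem_singleton_iff]
  exact ⟨fun h => ⟨h j, fun i _ => h i⟩, fun ⟨hj, h⟩ i => by by_cases hi : i = j <;> simp_all⟩

lemma exactlyOne_eq_inter (A : ι → Set Ω) (j : ι) :
    exactlyOne A j = A j ∩ ⋂ i ∈ ({j}ᶜ : Set ι), (A i)ᶜ := by
  ext ω; simp [exactlyOne]

lemma atMostOne_eq_union (A : ι → Set Ω) : atMostOne A = noneOf A ∪ ⋃ j, exactlyOne A j := by
  ext ω
  simp only [atMostOne, noneOf, exactlyOne, mem_union, mem_iUnion, mem_ofPred_eq]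
  constructor
  · intro h
    by_cases hnone : ∀ j, ω ∉ A j
    · exact Or.inl hnone
    · push Not at hnone
      obtain ⟨j, hj⟩ := hnone
      exact Or.inr ⟨j, hj, fun j' hj' hj'A => hj' (h j' j hj'A hj)⟩
  · rintro (hnone | ⟨j, -, hothers⟩) j₁ j₂ h₁ h₂
    · exact absurd h₁ (hnone j₁)
    · rw [not_imp_not.1 (hothers j₁) h₁, not_imp_not.1 (hothers j₂) h₂]

lemma pairwise_disjoint_exactlyOne (A : ι → Set Ω) : Pairwise (Disjoint on exactlyOne A) :=
  fun _ k hik => Set.disjoint_left.2 fun _ hi hk => hi.2 k (Ne.symm hik) hk.1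

lemma disjoint_noneOf_iUnion_exactlyOne (A : ι → Set Ω) :
    Disjoint (noneOf A) (⋃ j, exactlyOne A j) :=
  Set.disjoint_left.2 fun _ hnone hone =>
    let ⟨j, hj⟩ := mem_iUnion.1 hone
    hnone j hj.1

section

variable [Countable ι] {A : ι → Set Ω}

lemma measurableSet_exactlyOne (hA : ∀ j, MeasurableSet (A j)) (j : ι) :
    MeasurableSet (exactlyOne A j) := by
  rw [exactlyOne_eq_inter]
  exact (hA j).inter (.biInter (to_countable _) fun i _ => (hA i).compl)

lemma measure_atMostOne (μ : Measure Ω) (hA : ∀ j, MeasurableSet (A j)) :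
    μ (atMostOne A) = μ (noneOf A) + ∑' j, μ (exactlyOne A j) := by
  rw [atMostOne_eq_union, measure_union (disjoint_noneOf_iUnion_exactlyOne A)
    (.iUnion (measurableSet_exactlyOne hA)),
    measure_iUnion (pairwise_disjoint_exactlyOne A) (measurableSet_exactlyOne hA)]

variable {P : Measure Ω}

lemma iIndepSet.measure_exactlyOne (hA : ∀ j, MeasurableSet (A j)) (h : iIndepSet A P) (j : ι)
    (hAc : P (A j)ᶜ ≠ 0) :
    P (exactlyOne A j) = P (noneOf A) * (P (A j) / P (A j)ᶜ) := by
  have := h.isProbabilityMeasure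
  have hind := (Indep_iff _ _ P).1
    (h.indep_generateFrom_of_disjoint hA {j} {j}ᶜ disjoint_compl_right)
  have hAj :
      MeasurableSet[MeasurableSpace.generateFrom {t | ∃ n ∈ ({j} : Set ι), A n = t}] (A j) :=
    .basic _ ⟨j, rfl, rfl⟩
  have hC : MeasurableSet[MeasurableSpace.generateFrom {t | ∃ n ∈ ({j}ᶜ : Set ι), A n = t}]
      (⋂ i ∈ ({j}ᶜ : Set ι), (A i)ᶜ) :=
    .biInter (to_countable _) fun i hi => (MeasurableSpace.measurableSet_generateFrom
      (s := {t | ∃ n ∈ ({j}ᶜ : Set ι), A n = t}) ⟨i, hi, rfl⟩).compl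
  rw [← mul_div_assoc, ENNReal.eq_div_iff hAc (measure_ne_top _ _), exactlyOne_eq_inter,
    noneOf_eq_compl_inter A j, hind _ _ hAj hC, hind _ _ hAj.compl hC]
  ring

end

section

variable {P : Measure Ω} {A : ℕ → Set Ω}

lemma iIndepSet.tendsto_prod_range_measure_compl (hA : ∀ j, MeasurableSet (A j))
    (h : iIndepSet A P) :
    Tendsto (fun n => ∏ i ∈ Finset.range n, P (A i)ᶜ) atTop (nhds (P (noneOf A))) := by
  have hfin : ∀ n, P (⋂ i ∈ Finset.range n, (A i)ᶜ) = ∏ i ∈ Finset.range n, P (A i)ᶜ := fun n =>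
    ((iIndepSet_iff_iIndep A P).1 h).meas_biInter fun i _ =>
      (MeasurableSpace.measurableSet_generateFrom (mem_singleton (A i))).compl
  have hlim : ⋂ n, ⋂ i ∈ Finset.range n, (A i)ᶜ = noneOf A := by
    ext ω
    simp only [noneOf_eq_iInter_compl, mem_iInter, Finset.mem_range]
    exact ⟨fun h i => h (i + 1) i (lt_add_one i), fun h n i _ => h i⟩
  have := h.isProbabilityMeasure
  simp_rw [← hfin, ← hlim]
  exact tendsto_measure_iInter_atTop
    (fun n => (MeasurableSet.biInter (to_countable _) fun i _ => (hA i).compl).nullMeasurableSet)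
    (fun m n hmn => biInter_subset_biInter_left (by simpa using hmn))
    ⟨0, measure_ne_top P _⟩

end

end ProbabilityTheory

section

variable {r x : ℝ}

lemma Real.exp_neg_div_le_div_add (hr : 0 < r) (hx : 0 ≤ x) :
    Real.exp (-(x / r)) ≤ r / (r + x) := by
  have h : r / (r + x) = (x / r + 1)⁻¹ := by field_simp; ring
  rw [h, Real.exp_neg]
  exact inv_anti₀ (by positivity) (Real.add_one_le_exp _)

lemma ENNReal.one_sub_ofReal_div_add (hr : 0 < r) (hx : 0 ≤ x) :
    1 - ENNReal.ofReal (x / (r + x)) = ENNReal.ofReal (r / (r + x)) := by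
  rw [← ENNReal.ofReal_one, ← ENNReal.ofReal_sub _ (by positivity)]
  congr 1
  field_simp
  ring

lemma ENNReal.ofReal_div_add_div_ofReal_div_add (hr : 0 < r) (hx : 0 ≤ x) :
    ENNReal.ofReal (x / (r + x)) / ENNReal.ofReal (r / (r + x)) = ENNReal.ofReal (x / r) := by
  rw [← ENNReal.ofReal_div_of_pos (by positivity), div_div_div_cancel_right₀ (by positivity)]

variable {ι : Type*} {p : ι → ℝ}

lemma ENNReal.ofReal_exp_neg_tsum_div_le_prod (hr : 0 < r) (hp0 : ∀ j, 0 ≤ p j)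
    (hpsum : Summable p) (s : Finset ι) :
    ENNReal.ofReal (Real.exp (-((∑' j, p j) / r))) ≤
      ∏ j ∈ s, (1 - ENNReal.ofReal (p j / (r + p j))) := by
  rw [Finset.prod_congr rfl fun j _ => ENNReal.one_sub_ofReal_div_add hr (hp0 j),
    ← ENNReal.ofReal_prod_of_nonneg fun j _ => by have := hp0 j; positivity]
  gcongr
  calc Real.exp (-((∑' j, p j) / r)) ≤ Real.exp (-(∑ j ∈ s, p j / r)) := by
        rw [← Finset.sum_div]
        gcongr
        exact hpsum.sum_le_tsum _ fun j _ => hp0 j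
    _ = ∏ j ∈ s, Real.exp (-(p j / r)) := by rw [← Real.exp_sum, Finset.sum_neg_distrib]
    _ ≤ ∏ j ∈ s, r / (r + p j) := Finset.prod_le_prod (fun _ _ => (Real.exp_pos _).le)
        fun j _ => Real.exp_neg_div_le_div_add hr (hp0 j)

lemma ENNReal.one_add_tsum_ofReal_div (hp0 : ∀ j, 0 ≤ p j) (hpsum : Summable p) (hr : 0 < r)
    (hrp : r + ∑' j, p j = 1) :
    1 + ∑' j, ENNReal.ofReal (p j / r) = (ENNReal.ofReal r)⁻¹ := by
  rw [← ENNReal.ofReal_tsum_of_nonneg (fun j => div_nonneg (hp0 j) hr.le) (hpsum.div_const r),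
    tsum_div_const, ← ENNReal.ofReal_one, ← ENNReal.ofReal_add zero_le_one
      (div_nonneg (tsum_nonneg hp0) hr.le), ← ENNReal.ofReal_inv_of_pos hr]
  congr 1
  field_simp
  linarith

end

/-- Let `(p j)` be nonnegative reals with `∑ j, p j < 1`, set
`r = 1 - ∑ j, p j`, and let `(A j)` be mutually independent events with
`P (A j) = p j / (r + p j)`. Let `Z = ∏_j (1 - p j / (r + p j))` (limit of the partial
products). Then `Z > 0`; `P(no A j occurs) = Z`; for each `j`,
`P(A j occurs and no other A j' occurs) = Z · p j / r`; `P(at most one A j occurs) = Z/r`;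
and hence, conditioned on at most one event occurring, the probability that no event
occurs is `r` and the probability that exactly `A j` occurs is `p j`. -/
theorem block_residual_conditioning
    {Ω : Type*} [MeasurableSpace Ω] (P : Measure Ω) [IsProbabilityMeasure P]
    (p : ℕ → ℝ) (hp0 : ∀ j, 0 ≤ p j) (hpsum : Summable p) (hplt : ∑' j, p j < 1)
    (r : ℝ) (hr : r = 1 - ∑' j, p j)
    (A : ℕ → Set Ω) (hA : ∀ j, MeasurableSet (A j)) (hindep : iIndepSet A P)
    (hPA : ∀ j, P (A j) = ENNReal.ofReal (p j / (r + p j)))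
    (Z : ℝ≥0∞)
    (hZ : Tendsto (fun n => ∏ j ∈ Finset.range n, (1 - ENNReal.ofReal (p j / (r + p j))))
      atTop (nhds Z)) :
    0 < Z ∧
      P {ω | ∀ j, ω ∉ A j} = Z ∧
      (∀ j, P {ω | ω ∈ A j ∧ ∀ j', j' ≠ j → ω ∉ A j'} = Z * ENNReal.ofReal (p j / r)) ∧
      P {ω | ∀ j j', ω ∈ A j → ω ∈ A j' → j = j'} = Z / ENNReal.ofReal r ∧
      P {ω | ∀ j, ω ∉ A j} / P {ω | ∀ j j', ω ∈ A j → ω ∈ A j' → j = j'} =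
        ENNReal.ofReal r ∧
      (∀ j, P {ω | ω ∈ A j ∧ ∀ j', j' ≠ j → ω ∉ A j'} /
          P {ω | ∀ j j', ω ∈ A j → ω ∈ A j' → j = j'} = ENNReal.ofReal (p j)) := by
  have hr0 : 0 < r := by rw [hr]; linarith
  have hPAc : ∀ j, P (A j)ᶜ = ENNReal.ofReal (r / (r + p j)) := fun j => by
    rw [prob_compl_eq_one_sub (hA j), hPA j, ENNReal.one_sub_ofReal_div_add hr0 (hp0 j)]
  have hnone : P (noneOf A) = Z := by
    refine tendsto_nhds_unique (hindep.tendsto_prod_range_measure_compl hA) ?_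
    simpa only [prob_compl_eq_one_sub (hA _), hPA] using hZ
  have hZ0 : 0 < Z := (ENNReal.ofReal_pos.2 (Real.exp_pos _)).trans_le <|
    ge_of_tendsto' hZ fun n => ENNReal.ofReal_exp_neg_tsum_div_le_prod hr0 hp0 hpsum _
  have hZtop : Z ≠ ∞ := hnone ▸ measure_ne_top P _
  have hone : ∀ j, P (exactlyOne A j) = Z * ENNReal.ofReal (p j / r) := fun j => by
    have hAc : P (A j)ᶜ ≠ 0 := by
      rw [hPAc]
      exact (ENNReal.ofReal_pos.2 (div_pos hr0 (by linarith [hp0 j]))).ne'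
    rw [hindep.measure_exactlyOne hA j hAc, hnone, hPA, hPAc,
      ENNReal.ofReal_div_add_div_ofReal_div_add hr0 (hp0 j)]
  have hatMost : P (atMostOne A) = Z / ENNReal.ofReal r := by
    rw [measure_atMostOne P hA, hnone, tsum_congr hone, ENNReal.tsum_mul_left, ← mul_one_add,
      ENNReal.one_add_tsum_ofReal_div hp0 hpsum hr0 (by rw [hr]; ring), div_eq_mul_inv]
  have hcondNone : P (noneOf A) / P (atMostOne A) = ENNReal.ofReal r := by
    rw [hnone, hatMost, ENNReal.div_div_cancel hZ0.ne' hZtop]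
  have hcondOne : ∀ j, P (exactlyOne A j) / P (atMostOne A) = ENNReal.ofReal (p j) := fun j => by
    rw [hone, hatMost, div_eq_mul_inv Z, ENNReal.mul_div_mul_left _ _ hZ0.ne' hZtop,
      div_eq_mul_inv, inv_inv, ← ENNReal.ofReal_mul (div_nonneg (hp0 j) hr0.le),
      div_mul_cancel₀ _ hr0.ne']
  exact ⟨hZ0, hnone, hone, hatMost, hcondNone, hcondOne⟩
end

section
/- For i ∈ ℕ₊ let p_i = 1/(i²+1), let Z = ∏_{i=1}^∞ (1 − p_i) (the limit of the partial products, which lies in (0,1)), and for each finite subset I ⊆ ℕ₊ let P(I) = Z · ∏_{i∈I} p_i/(1−p_i). Then for every positive integer c, the sum Σ_{I} |I| · P(I)^{c/|I|}, taken over all nonempty finite subsets I of ℕ₊ with real exponent c/|I|, diverges (equals ∞). -/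
/-! Since `p/(1 - p) = 1/i²`, adding a point `j ∉ I` divides `P(I)` by `j²`. Take
`F = {1, …, 2c}`: for the sets `F ∪ {j}` with `j > 2c` the exponent is `s = c/(2c + 1) ≤ 1/2`,
so their terms are at least `P(F)^s / j^(2s) ≥ P(F)^s / j`, a divergent harmonic series. -/

open Filter ENNReal

lemma tsum_ofReal_eq_top_of_not_summable {ι : Type*} {f : ι → ℝ} (hf : ∀ i, 0 ≤ f i)
    (h : ¬Summable f) : ∑' i, ENNReal.ofReal (f i) = ∞ := by
  by_contra hne
  exact h (by simpa [ENNReal.toReal_ofReal (hf _)] using ENNReal.summable_toReal hne)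

lemma not_summable_div_natCast_add {B : ℝ} (hB : B ≠ 0) (m : ℕ) :
    ¬Summable fun k : ℕ => B / ((k : ℝ) + m) := by
  intro h
  refine Real.not_summable_natCast_inv ((summable_nat_add_iff m).mp ?_)
  simpa [div_eq_mul_inv, hB] using h.mul_left B⁻¹

lemma rpow_div_le_div_sq_rpow {a x s : ℝ} (ha : 0 ≤ a) (hx : 1 ≤ x) (hs : 2 * s ≤ 1) :
    a ^ s / x ≤ (a / x ^ 2) ^ s := by
  have hx0 : 0 < x := one_pos.trans_le hx
  rw [Real.div_rpow ha (by positivity), ← Real.rpow_natCast, ← Real.rpow_mul hx0.le]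
  refine div_le_div_of_nonneg_left (Real.rpow_nonneg ha s) (by positivity) ?_
  simpa using (Real.rpow_le_rpow_of_exponent_le hx hs).trans_eq (Real.rpow_one x)

lemma one_div_sq_add_one_div_one_sub {x : ℝ} (hx : x ≠ 0) :
    1 / (x ^ 2 + 1) / (1 - 1 / (x ^ 2 + 1)) = 1 / x ^ 2 := by
  have : x ^ 2 + 1 ≠ 0 := by positivity
  field_simp
  ring

/-- The paper's `P(I)`, with `p i = 1/(i² + 1)`. -/
noncomputable def instanceProb (Z : ℝ) (I : Finset ℕ+) : ℝ :=
  Z * ∏ i ∈ I, (1 / (((i : ℕ) : ℝ) ^ 2 + 1)) / (1 - 1 / (((i : ℕ) : ℝ) ^ 2 + 1))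

namespace instanceProb

variable {Z : ℝ} {I : Finset ℕ+} {j : ℕ+}

lemma eq_mul_prod (Z : ℝ) (I : Finset ℕ+) :
    instanceProb Z I = Z * ∏ i ∈ I, 1 / ((i : ℕ) : ℝ) ^ 2 := by
  unfold instanceProb
  congr 1
  exact Finset.prod_congr rfl fun i _ => one_div_sq_add_one_div_one_sub (by positivity)

lemma nonneg (hZ : 0 ≤ Z) : 0 ≤ instanceProb Z I := by
  rw [eq_mul_prod]; positivity

lemma pos (hZ : 0 < Z) : 0 < instanceProb Z I := by
  rw [eq_mul_prod]; positivity

lemma insert_eq_div (hj : j ∉ I) :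
    instanceProb Z (insert j I) = instanceProb Z I / ((j : ℕ) : ℝ) ^ 2 := by
  simp only [eq_mul_prod, Finset.prod_insert hj]
  ring

lemma rpow_div_le_card_mul_rpow_insert (hZ : 0 ≤ Z) (hj : j ∉ I) {c : ℕ}
    (hc : 2 * c ≤ I.card + 1) :
    instanceProb Z I ^ ((c : ℝ) / (I.card + 1 : ℕ)) / ((j : ℕ) : ℝ) ≤
      (insert j I).card * instanceProb Z (insert j I) ^ ((c : ℝ) / (insert j I).card) := by
  rw [Finset.card_insert_of_notMem hj, insert_eq_div hj]
  have hs : 2 * ((c : ℝ) / (I.card + 1 : ℕ)) ≤ 1 := by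
    rw [← mul_div_assoc, div_le_one (by positivity)]
    exact_mod_cast hc
  refine (rpow_div_le_div_sq_rpow (nonneg hZ) (Nat.one_le_cast.mpr j.pos) hs).trans ?_
  exact le_mul_of_one_le_left (Real.rpow_nonneg (div_nonneg (nonneg hZ) (sq_nonneg _)) _) (by simp)

end instanceProb

lemma injective_insert_of_notMem {α : Type*} [DecidableEq α] {ι : Type*} {F : Finset α}
    {j : ι → α} (hj : Function.Injective j) (hF : ∀ k, j k ∉ F) :
    Function.Injective fun k => insert (j k) F := by
  intro a b hab
  have : j a ∈ insert (j b) F := by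
    rw [← show insert (j a) F = insert (j b) F from hab]
    exact Finset.mem_insert_self (j a) F
  exact hj ((Finset.mem_insert.mp this).resolve_right (hF a))

theorem ti_example_fails_sufficient_condition_general
    (Z : ℝ)
    (hZ0 : 0 < Z)
    (c : ℕ) :
    ∑' I : {I : Finset ℕ+ // I.Nonempty},
        ENNReal.ofReal
          (((I : Finset ℕ+).card : ℝ) *
            (Z * ∏ i ∈ (I : Finset ℕ+),
                (1 / (((i : ℕ) : ℝ) ^ 2 + 1)) / (1 - 1 / (((i : ℕ) : ℝ) ^ 2 + 1))) ^
              ((c : ℝ) / ((I : Finset ℕ+).card : ℝ))) = ⊤ := by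
  set F : Finset ℕ+ := (Finset.range (2 * c)).map ⟨Nat.succPNat, Nat.succPNat_injective⟩
  have hFcard : F.card = 2 * c := by simp [F]
  set j : ℕ → ℕ+ := fun k => (2 * c + k).succPNat
  have hjF : ∀ k, j k ∉ F := by simp [F, j]
  let f : ℕ → {I : Finset ℕ+ // I.Nonempty} :=
    fun k => ⟨insert (j k) F, Finset.insert_nonempty _ _⟩
  have hf : Function.Injective f := .of_comp (f := Subtype.val) <|
    injective_insert_of_notMem (Nat.succPNat_injective.comp (add_right_injective _)) hjF
  set B := instanceProb Z F ^ ((c : ℝ) / (F.card + 1 : ℕ))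
  have hB : 0 < B := Real.rpow_pos_of_pos (instanceProb.pos hZ0) _
  have hdiv := tsum_ofReal_eq_top_of_not_summable (fun k => by positivity)
    (not_summable_div_natCast_add hB.ne' (F.card + 1))
  refine eq_top_mono ?_ hdiv
  calc _ ≤ ∑' k, ENNReal.ofReal ((f k : Finset ℕ+).card *
          instanceProb Z (f k) ^ ((c : ℝ) / (f k : Finset ℕ+).card)) := by
        refine ENNReal.tsum_le_tsum fun k => ENNReal.ofReal_le_ofReal ?_
        have hjk : ((j k : ℕ) : ℝ) = k + (F.card + 1 : ℕ) := by
          simp only [j, Nat.succPNat_coe, hFcard]; push_cast; ring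
        rw [← hjk]
        exact instanceProb.rpow_div_le_card_mul_rpow_insert hZ0.le (hjF k) (by omega)
    _ ≤ _ := ENNReal.tsum_comp_le_tsum_of_injective hf _

/-- For `i ∈ ℕ₊` let `p i = 1/(i² + 1)`, let
`Z = ∏_{i=1}^∞ (1 - p i)` (limit of partial products, lying in `(0,1)`), and for each
finite `I ⊆ ℕ₊` let `P I = Z · ∏_{i ∈ I} p i / (1 - p i)`. Then for every positive
integer `c`, the sum `∑_{I ≠ ∅} |I| · (P I)^(c/|I|)` over nonempty finite subsets of
`ℕ₊` diverges. -/
theorem ti_example_fails_sufficient_condition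
    (Z : ℝ)
    (hZ : Tendsto
      (fun n : ℕ => ∏ i ∈ Finset.range n, (1 - 1 / (((i : ℝ) + 1) ^ 2 + 1)))
      atTop (nhds Z))
    (hZ0 : 0 < Z) (hZ1 : Z < 1)
    (c : ℕ) (hc : 1 ≤ c) :
    ∑' I : {I : Finset ℕ+ // I.Nonempty},
        ENNReal.ofReal
          (((I : Finset ℕ+).card : ℝ) *
            (Z * ∏ i ∈ (I : Finset ℕ+),
                (1 / (((i : ℕ) : ℝ) ^ 2 + 1)) / (1 - 1 / (((i : ℕ) : ℝ) ^ 2 + 1))) ^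
              ((c : ℝ) / ((I : Finset ℕ+).card : ℝ))) = ⊤ :=
  ti_example_fails_sufficient_condition_general Z hZ0 c
end

section
/- Let F be a countable set, μ a probability distribution on the finite subsets of F, and p : F → [0,1] such that μ is tuple-independent with marginals p, i.e., for every finite S ⊆ F, Pr_{I∼μ}(S ⊆ I) = ∏_{f∈S} p(f). Let G be a set, V a monotone map from finite subsets of F to finite subsets of G (I ⊆ J implies V(I) ⊆ V(J)), and ν the pushforward of μ under V. Then ν has no two mutually exclusive facts of positive marginal probability: for all g₁, g₂ ∈ G, if Pr_{D∼ν}(g₁ ∈ D) > 0 and Pr_{D∼ν}(g₂ ∈ D) > 0, then Pr_{D∼ν}(g₁ ∈ D and g₂ ∈ D) > 0. -/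
open MeasureTheory ENNReal

/-!
Since `F` is countable, so is `Finset F`, and a positive-probability event of `μ` contains an
instance `Iᵢ` of positive probability, which forces every fact of `Iᵢ` to have a nonzero
marginal. Then `∏ f ∈ I₁ ∪ I₂, p f ≠ 0`, so `I₁ ∪ I₂` is contained in the random instance with
positive probability, and by monotonicity of `V` every such instance sees both `g₁` and `g₂`.
-/

theorem exists_mem_measure_singleton_pos {α : Type*} [MeasurableSpace α] [Countable α]
    {μ : Measure α} {s : Set α} (hs : 0 < μ s) : ∃ x ∈ s, 0 < μ {x} := by
  by_contra! h
  refine hs.ne' ?_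
  rw [← Set.biUnion_of_singleton s]
  exact (measure_biUnion_null_iff s.to_countable).2 fun x hx => nonpos_iff_eq_zero.1 (h x hx)

def IsTupleIndependent {F : Type*} [MeasurableSpace (Finset F)] (μ : Measure (Finset F))
    (p : F → ℝ≥0∞) : Prop :=
  ∀ S : Finset F, μ {I | S ⊆ I} = ∏ f ∈ S, p f

namespace IsTupleIndependent

variable {F : Type*} [MeasurableSpace (Finset F)] {μ : Measure (Finset F)} {p : F → ℝ≥0∞}

theorem prod_ne_zero_of_measure_singleton_pos (hTI : IsTupleIndependent μ p) {I : Finset F}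
    (hI : 0 < μ {I}) : ∏ f ∈ I, p f ≠ 0 := by
  rw [← hTI]
  exact (hI.trans_le (measure_mono fun J (hJ : J = I) => hJ.ge)).ne'

theorem measure_union_subset_pos [DecidableEq F] (hTI : IsTupleIndependent μ p)
    {I₁ I₂ : Finset F} (h₁ : 0 < μ {I₁}) (h₂ : 0 < μ {I₂}) : 0 < μ {I | I₁ ∪ I₂ ⊆ I} := by
  have hp₁ := Finset.prod_ne_zero_iff.1 (hTI.prod_ne_zero_of_measure_singleton_pos h₁)
  have hp₂ := Finset.prod_ne_zero_iff.1 (hTI.prod_ne_zero_of_measure_singleton_pos h₂)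
  rw [hTI, pos_iff_ne_zero, Finset.prod_ne_zero_iff]
  intro f hf
  rcases Finset.mem_union.1 hf with hf | hf
  exacts [hp₁ f hf, hp₂ f hf]

end IsTupleIndependent

theorem monotone_view_of_TI_no_mutually_exclusive_facts_general
    {F G : Type*} [Countable F]
    [MeasurableSpace (Finset F)]
    (μ : Measure (Finset F))
    (p : F → ℝ≥0∞)
    (hTI : ∀ S : Finset F, μ {I | S ⊆ I} = ∏ f ∈ S, p f)
    (V : Finset F → Finset G) (hV : ∀ I J : Finset F, I ⊆ J → V I ⊆ V J)
    (g₁ g₂ : G)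
    (h₁ : 0 < μ {I | g₁ ∈ V I}) (h₂ : 0 < μ {I | g₂ ∈ V I}) :
    0 < μ {I | g₁ ∈ V I ∧ g₂ ∈ V I} := by
  classical
  obtain ⟨I₁, hgI₁, hI₁⟩ := exists_mem_measure_singleton_pos h₁
  obtain ⟨I₂, hgI₂, hI₂⟩ := exists_mem_measure_singleton_pos h₂
  refine (IsTupleIndependent.measure_union_subset_pos hTI hI₁ hI₂).trans_le (measure_mono ?_)
  intro J (hJ : I₁ ∪ I₂ ⊆ J)
  exact ⟨hV I₁ J (Finset.union_subset_left hJ) hgI₁, hV I₂ J (Finset.union_subset_right hJ) hgI₂⟩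

/-- Let `F` be countable, `μ` a probability distribution on the finite
subsets of `F` which is tuple-independent with marginals `p : F → [0,1]`, i.e.
`Pr_{I∼μ}(S ⊆ I) = ∏_{f∈S} p f` for every finite `S ⊆ F`. Let `V` be a monotone map from
finite subsets of `F` to finite subsets of `G` and `ν` the pushforward of `μ` under `V`.
Then `ν` has no two mutually exclusive facts of positive marginal probability: if
`g₁, g₂` have positive marginal probability in `ν`, so does their conjunction. -/
theorem monotone_view_of_TI_no_mutually_exclusive_facts
    {F G : Type*} [Countable F]
    [MeasurableSpace (Finset F)] [MeasurableSingletonClass (Finset F)]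
    (μ : Measure (Finset F)) [IsProbabilityMeasure μ]
    (p : F → ℝ≥0∞) (hp1 : ∀ f, p f ≤ 1)
    (hTI : ∀ S : Finset F, μ {I | S ⊆ I} = ∏ f ∈ S, p f)
    (V : Finset F → Finset G) (hV : ∀ I J : Finset F, I ⊆ J → V I ⊆ V J)
    (g₁ g₂ : G)
    (h₁ : 0 < μ {I | g₁ ∈ V I}) (h₂ : 0 < μ {I | g₂ ∈ V I}) :
    0 < μ {I | g₁ ∈ V I ∧ g₂ ∈ V I} :=
  monotone_view_of_TI_no_mutually_exclusive_facts_general μ p hTI V hV g₁ g₂ h₁ h₂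
end

section
/- Let (x_k)_{k∈ℕ} and (y_k)_{k∈ℕ} be sequences in [0,1] with x_k + y_k ≤ 1 for all k, Σ_k x_k < ∞ and Σ_k y_k < ∞, and let ε ∈ [0,1]. If 1 − ∏_k (1−x_k) − ∏_k (1−y_k) + ∏_k (1−x_k−y_k) ≥ ε², then Σ_k x_k + Σ_k y_k ≥ ε. (The infinite products are limits of the finite partial products.) -/
open Filter

/-!
Since `(1 - a)(1 - b) ≥ 1 - a - b` for `a, b ≥ 0`, the product `∏ (1 - x k - y k)` is at most
`∏ (1 - x k) * ∏ (1 - y k)`, so the hypothesis gives `ε² ≤ (1 - ∏ (1 - x k)) (1 - ∏ (1 - y k))`.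
By the Weierstrass product inequality `∏ (1 - z k) ≥ 1 - ∑ z k` each factor is at most the
corresponding sum, hence `ε² ≤ (∑ x k)(∑ y k) ≤ (∑ x k + ∑ y k)²`.
-/

namespace Finset

variable {ι R : Type*} [CommRing R] [LinearOrder R] [IsStrictOrderedRing R]

theorem one_sub_sum_le_prod_one_sub (s : Finset ι) {f : ι → R}
    (hf0 : ∀ i ∈ s, 0 ≤ f i) (hf1 : ∀ i ∈ s, f i ≤ 1) :
    1 - ∑ i ∈ s, f i ≤ ∏ i ∈ s, (1 - f i) := by
  induction s using Finset.cons_induction with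
  | empty => simp
  | cons a s ha ih =>
    rw [prod_cons, sum_cons]
    have hs0 : 0 ≤ ∑ i ∈ s, f i := sum_nonneg fun i hi => hf0 i (mem_cons_of_mem hi)
    have ih := ih (fun i hi => hf0 i (mem_cons_of_mem hi)) (fun i hi => hf1 i (mem_cons_of_mem hi))
    have ha0 := hf0 a (mem_cons_self a s)
    have ha1 := hf1 a (mem_cons_self a s)
    nlinarith

theorem prod_one_sub_sub_le_prod_mul_prod (s : Finset ι) {f g : ι → R}
    (hf : ∀ i ∈ s, 0 ≤ f i) (hg : ∀ i ∈ s, 0 ≤ g i) (hfg : ∀ i ∈ s, f i + g i ≤ 1) :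
    ∏ i ∈ s, (1 - f i - g i) ≤ (∏ i ∈ s, (1 - f i)) * ∏ i ∈ s, (1 - g i) := by
  rw [← prod_mul_distrib]
  refine prod_le_prod (fun i hi => by linarith [hfg i hi]) fun i hi => ?_
  nlinarith [hf i hi, hg i hi]

end Finset

section InfiniteProduct

variable {z : ℕ → ℝ} {P : ℝ}

theorem le_one_of_tendsto_prod_one_sub (hz0 : ∀ k, 0 ≤ z k) (hz1 : ∀ k, z k ≤ 1)
    (hP : Tendsto (fun n => ∏ k ∈ Finset.range n, (1 - z k)) atTop (nhds P)) : P ≤ 1 :=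
  le_of_tendsto' hP fun _ =>
    Finset.prod_le_one (fun k _ => sub_nonneg.2 (hz1 k)) fun k _ => sub_le_self _ (hz0 k)

theorem one_sub_tsum_le_of_tendsto_prod_one_sub (hz0 : ∀ k, 0 ≤ z k) (hz1 : ∀ k, z k ≤ 1)
    (hzs : Summable z)
    (hP : Tendsto (fun n => ∏ k ∈ Finset.range n, (1 - z k)) atTop (nhds P)) :
    1 - ∑' k, z k ≤ P :=
  ge_of_tendsto' hP fun n =>
    calc 1 - ∑' k, z k
        ≤ 1 - ∑ k ∈ Finset.range n, z k :=
          sub_le_sub_left (hzs.sum_le_tsum _ fun k _ => hz0 k) 1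
      _ ≤ ∏ k ∈ Finset.range n, (1 - z k) :=
          Finset.one_sub_sum_le_prod_one_sub _ (fun k _ => hz0 k) fun k _ => hz1 k

end InfiniteProduct

theorem le_add_of_sq_le_mul {R : Type*} [CommRing R] [LinearOrder R] [IsStrictOrderedRing R]
    {a b c : R} (ha : 0 ≤ a) (hb : 0 ≤ b) (h : c ^ 2 ≤ a * b) : c ≤ a + b :=
  (le_abs_self c).trans <| abs_le_of_sq_le_sq (h.trans <| by nlinarith) (add_nonneg ha hb)

theorem weierstrass_product_estimate_general
    (x y : ℕ → ℝ)
    (hx0 : ∀ k, 0 ≤ x k) (hx1 : ∀ k, x k ≤ 1)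
    (hy0 : ∀ k, 0 ≤ y k) (hy1 : ∀ k, y k ≤ 1)
    (hxy : ∀ k, x k + y k ≤ 1)
    (hxs : Summable x) (hys : Summable y)
    (ε : ℝ)
    (Px Py Pxy : ℝ)
    (hPx : Tendsto (fun n => ∏ k ∈ Finset.range n, (1 - x k)) atTop (nhds Px))
    (hPy : Tendsto (fun n => ∏ k ∈ Finset.range n, (1 - y k)) atTop (nhds Py))
    (hPxy : Tendsto (fun n => ∏ k ∈ Finset.range n, (1 - x k - y k)) atTop (nhds Pxy))
    (h : ε ^ 2 ≤ 1 - Px - Py + Pxy) :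
    ε ≤ (∑' k, x k) + ∑' k, y k := by
  have hPxy_le : Pxy ≤ Px * Py :=
    le_of_tendsto_of_tendsto' hPxy (hPx.mul hPy) fun n =>
      Finset.prod_one_sub_sub_le_prod_mul_prod _ (fun k _ => hx0 k) (fun k _ => hy0 k)
        fun k _ => hxy k
  refine le_add_of_sq_le_mul (tsum_nonneg hx0) (tsum_nonneg hy0) ?_
  calc ε ^ 2 ≤ 1 - Px - Py + Pxy := h
    _ ≤ (1 - Px) * (1 - Py) := by linarith
    _ ≤ (∑' k, x k) * ∑' k, y k :=
      mul_le_mul (sub_le_comm.1 (one_sub_tsum_le_of_tendsto_prod_one_sub hx0 hx1 hxs hPx))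
        (sub_le_comm.1 (one_sub_tsum_le_of_tendsto_prod_one_sub hy0 hy1 hys hPy))
        (sub_nonneg.2 (le_one_of_tendsto_prod_one_sub hy0 hy1 hPy)) (tsum_nonneg hx0)

/-- Let `(x k)`, `(y k)` be `[0,1]`-valued sequences with
`x k + y k ≤ 1`, both summable, and let `ε ∈ [0,1]`. If
`1 - ∏_k (1 - x k) - ∏_k (1 - y k) + ∏_k (1 - x k - y k) ≥ ε²`, then
`∑ k, x k + ∑ k, y k ≥ ε` (the infinite products are limits of the partial products). -/
theorem weierstrass_product_estimate
    (x y : ℕ → ℝ)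
    (hx0 : ∀ k, 0 ≤ x k) (hx1 : ∀ k, x k ≤ 1)
    (hy0 : ∀ k, 0 ≤ y k) (hy1 : ∀ k, y k ≤ 1)
    (hxy : ∀ k, x k + y k ≤ 1)
    (hxs : Summable x) (hys : Summable y)
    (ε : ℝ) (hε0 : 0 ≤ ε) (hε1 : ε ≤ 1)
    (Px Py Pxy : ℝ)
    (hPx : Tendsto (fun n => ∏ k ∈ Finset.range n, (1 - x k)) atTop (nhds Px))
    (hPy : Tendsto (fun n => ∏ k ∈ Finset.range n, (1 - y k)) atTop (nhds Py))
    (hPxy : Tendsto (fun n => ∏ k ∈ Finset.range n, (1 - x k - y k)) atTop (nhds Pxy))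
    (h : ε ^ 2 ≤ 1 - Px - Py + Pxy) :
    ε ≤ (∑' k, x k) + ∑' k, y k :=
  weierstrass_product_estimate_general x y hx0 hx1 hy0 hy1 hxy hxs hys ε Px Py Pxy hPx hPy hPxy h
end
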